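/- arXiv:1101.4693 — 4 statements merged into one kernel-verified Lean document; each statement's English description precedes it below -/
import Mathlib

section
/- For a rational map f = (f₁, f₂) : ℂ → (ℂ*)², the Jacobian determinant J(z) = (i/4)((f₁'/f₁)(conj(f₂'/f₂)) − conj(f₁'/f₁)(f₂'/f₂)) of Log∘f, viewed as a function of z and z̄, has only simple poles: near any point a ∈ ℂ which is a zero or pole of f₁ or f₂, |J(z)| ≤ C/|z−a| for some constant C. -/
/-
Near `a` a nonzero rational function is `(z - a) ^ n * u z` with `u` analytic and `u a ≠ 0`,
so its logarithmic derivative is `n / (z - a)` plus a function bounded near `a`. The Jacobian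
equals `-Im (L₁ * conj L₂) / 2` for the logarithmic derivatives `L₁, L₂`, and the only term of
size `|z - a|⁻²` in `L₁ * conj L₂` is `n₁ * n₂ / |z - a| ^ 2`, which is real because the
residues `n₁, n₂` are integers; every remaining term is `O(|z - a|⁻¹)`.
-/

open Complex

/-- The Jacobian determinant of `Log ∘ (f₁, f₂)`. -/
noncomputable def Jac (f₁ f₂ : ℂ → ℂ) (z : ℂ) : ℂ :=
  (Complex.I / 4) *
    ((deriv f₁ z / f₁ z) * (starRingEnd ℂ) (deriv f₂ z / f₂ z)
      - (starRingEnd ℂ) (deriv f₁ z / f₁ z) * (deriv f₂ z / f₂ z))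

open Filter Topology Asymptotics ComplexConjugate

theorem MeromorphicAt.exists_logDeriv_eventuallyEq_div_add {𝕜 : Type*}
    [NontriviallyNormedField 𝕜] [CompleteSpace 𝕜] {f : 𝕜 → 𝕜} {a : 𝕜}
    (hf : MeromorphicAt f a) (h : meromorphicOrderAt f a ≠ ⊤) :
    ∃ g : 𝕜 → 𝕜, AnalyticAt 𝕜 g a ∧
      _root_.logDeriv f =ᶠ[𝓝[≠] a] fun z ↦ (meromorphicOrderAt f a).untop₀ / (z - a) + g z := by
  obtain ⟨u, hu, hua, hfu⟩ := (meromorphicOrderAt_ne_top_iff hf).1 h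
  set n := (meromorphicOrderAt f a).untop₀
  refine ⟨_root_.logDeriv u, hu.deriv.div hu hua, ?_⟩
  filter_upwards [logDeriv_congr_nhdsNE hfu, self_mem_nhdsWithin,
    eventually_nhdsWithin_of_eventually_nhds (hu.continuousAt.eventually_ne hua),
    eventually_nhdsWithin_of_eventually_nhds hu.eventually_analyticAt] with z hz hza huz hu'
  have hza' : z - a ≠ 0 := sub_ne_zero.2 hza
  rw [hz]
  simp only [smul_eq_mul]
  rw [logDeriv_mul (f := fun z ↦ (z - a) ^ n) z (zpow_ne_zero _ hza') huz
      ((differentiableAt_id.sub_const a).zpow (Or.inl hza')) hu'.differentiableAt,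
    logDeriv_fun_zpow (f := fun z ↦ z - a) (by fun_prop)]
  simp [logDeriv_apply, div_eq_mul_inv]

theorem meromorphicAt_eval_div_eval {𝕜 : Type*} [NontriviallyNormedField 𝕜]
    (p q : Polynomial 𝕜) (a : 𝕜) : MeromorphicAt (fun z ↦ p.eval z / q.eval z) a :=
  ((AnalyticOnNhd.eval_polynomial p) a trivial).meromorphicAt.div
    ((AnalyticOnNhd.eval_polynomial q) a trivial).meromorphicAt

theorem Polynomial.eventually_eval_ne_zero {p : Polynomial ℂ} (hp : p ≠ 0) (a : ℂ) :
    ∀ᶠ z in 𝓝[≠] a, p.eval z ≠ 0 := by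
  have hpa := AnalyticOnNhd.eval_polynomial (𝕜 := ℂ) p
  refine (hpa a trivial).eventually_eq_zero_or_eventually_ne_zero.resolve_left fun h ↦ hp ?_
  exact Polynomial.funext fun z ↦ by
    simpa using
      hpa.eqOn_zero_of_preconnected_of_eventuallyEq_zero isPreconnected_univ trivial h trivial

theorem meromorphicOrderAt_eval_div_eval_ne_top {p q : Polynomial ℂ} (hp : p ≠ 0) (hq : q ≠ 0)
    (a : ℂ) : meromorphicOrderAt (fun z ↦ p.eval z / q.eval z) a ≠ ⊤ := by
  rw [meromorphicOrderAt_ne_top_iff_eventually_ne_zero (meromorphicAt_eval_div_eval p q a)]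
  filter_upwards [p.eventually_eval_ne_zero hp a, q.eventually_eval_ne_zero hq a] with z hpz hqz
  exact div_ne_zero hpz hqz

theorem norm_Jac (f₁ f₂ : ℂ → ℂ) (z : ℂ) :
    ‖Jac f₁ f₂ z‖ = |(logDeriv f₁ z * conj (logDeriv f₂ z)).im| / 2 := by
  have hJac : Jac f₁ f₂ z = -((logDeriv f₁ z * conj (logDeriv f₂ z)).im / 2 : ℝ) := by
    have hconj : conj (logDeriv f₁ z) * logDeriv f₂ z =
        conj (logDeriv f₁ z * conj (logDeriv f₂ z)) := by
      simp [mul_comm]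
    rw [Jac, ← logDeriv_apply, ← logDeriv_apply, hconj, sub_conj]
    push_cast
    ring_nf
    rw [I_sq]
    ring
  rw [hJac, norm_neg, norm_real, Real.norm_eq_abs, abs_div, abs_two]

theorem abs_im_div_add_mul_conj_div_add_le (n₁ n₂ : ℝ) {w : ℂ} (hw : w ≠ 0) (h₁ h₂ : ℂ) :
    |((n₁ / w + h₁) * conj (n₂ / w + h₂)).im| ≤
      (|n₁| * ‖h₂‖ + |n₂| * ‖h₁‖) / ‖w‖ + ‖h₁‖ * ‖h₂‖ := by
  have hsplit : (n₁ / w + h₁) * conj (n₂ / w + h₂) = ((n₁ * n₂ / normSq w : ℝ) : ℂ) +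
      (n₁ / w * conj h₂ + h₁ * (n₂ / conj w) + h₁ * conj h₂) := by
    have hcw : conj w ≠ 0 := (map_ne_zero _).2 hw
    simp only [map_add, map_div₀, conj_ofReal]
    push_cast
    rw [← mul_conj w]
    field_simp
    ring
  rw [hsplit, add_im, ofReal_im, zero_add]
  calc |(n₁ / w * conj h₂ + h₁ * (n₂ / conj w) + h₁ * conj h₂).im|
      ≤ ‖n₁ / w * conj h₂‖ + ‖h₁ * (n₂ / conj w)‖ + ‖h₁ * conj h₂‖ :=
        (abs_im_le_norm _).trans norm_add₃_le
    _ = (|n₁| * ‖h₂‖ + |n₂| * ‖h₁‖) / ‖w‖ + ‖h₁‖ * ‖h₂‖ := by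
        have hw' : 0 < ‖w‖ := norm_pos_iff.2 hw
        simp only [norm_mul, norm_div, RCLike.norm_conj, norm_real, Real.norm_eq_abs]
        field_simp

theorem Jac_isBigO_inv_sub {f₁ f₂ g₁ g₂ : ℂ → ℂ} {a : ℂ} {n₁ n₂ : ℝ}
    (hg₁ : ContinuousAt g₁ a) (hg₂ : ContinuousAt g₂ a)
    (hf₁ : logDeriv f₁ =ᶠ[𝓝[≠] a] fun z ↦ n₁ / (z - a) + g₁ z)
    (hf₂ : logDeriv f₂ =ᶠ[𝓝[≠] a] fun z ↦ n₂ / (z - a) + g₂ z) :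
    Jac f₁ f₂ =O[𝓝[≠] a] fun z ↦ (z - a)⁻¹ := by
  set M₁ := ‖g₁ a‖ + 1
  set M₂ := ‖g₂ a‖ + 1
  have hM₁ : ∀ᶠ z in 𝓝 a, ‖g₁ z‖ ≤ M₁ := hg₁.norm.eventually (eventually_le_nhds (lt_add_one _))
  have hM₂ : ∀ᶠ z in 𝓝 a, ‖g₂ z‖ ≤ M₂ := hg₂.norm.eventually (eventually_le_nhds (lt_add_one _))
  refine IsBigO.of_bound ((|n₁| * M₂ + |n₂| * M₁ + M₁ * M₂) / 2) ?_
  filter_upwards [hf₁, hf₂, nhdsWithin_le_nhds hM₁, nhdsWithin_le_nhds hM₂,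
    nhdsWithin_le_nhds (Metric.closedBall_mem_nhds a one_pos), self_mem_nhdsWithin]
    with z hz₁ hz₂ hgz₁ hgz₂ hz hza
  have hw : z - a ≠ 0 := sub_ne_zero.2 hza
  have hw1 : ‖z - a‖ ≤ 1 := by simpa [dist_eq_norm] using hz
  have hprod : ‖g₁ z‖ * ‖g₂ z‖ * ‖z - a‖ ≤ M₁ * M₂ :=
    calc ‖g₁ z‖ * ‖g₂ z‖ * ‖z - a‖ ≤ ‖g₁ z‖ * ‖g₂ z‖ :=
          mul_le_of_le_one_right (by positivity) hw1
      _ ≤ M₁ * M₂ := mul_le_mul hgz₁ hgz₂ (norm_nonneg _) (hgz₁.trans' (norm_nonneg _))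
  rw [norm_Jac, hz₁, hz₂, norm_inv, ← div_eq_mul_inv]
  calc |((n₁ / (z - a) + g₁ z) * conj (n₂ / (z - a) + g₂ z)).im| / 2
      ≤ ((|n₁| * ‖g₂ z‖ + |n₂| * ‖g₁ z‖) / ‖z - a‖ + ‖g₁ z‖ * ‖g₂ z‖) / 2 := by
        gcongr
        exact abs_im_div_add_mul_conj_div_add_le n₁ n₂ hw _ _
    _ = (|n₁| * ‖g₂ z‖ + |n₂| * ‖g₁ z‖ + ‖g₁ z‖ * ‖g₂ z‖ * ‖z - a‖) / 2 / ‖z - a‖ := by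
        have hw' : 0 < ‖z - a‖ := norm_pos_iff.2 hw
        field_simp
    _ ≤ (|n₁| * M₂ + |n₂| * M₁ + M₁ * M₂) / 2 / ‖z - a‖ := by
        gcongr

theorem stmt1_general (p₁ q₁ p₂ q₂ : Polynomial ℂ)
    (hp₁ : p₁ ≠ 0) (hq₁ : q₁ ≠ 0) (hp₂ : p₂ ≠ 0) (hq₂ : q₂ ≠ 0)
    (f₁ f₂ : ℂ → ℂ)
    (hf₁ : ∀ z, f₁ z = p₁.eval z / q₁.eval z)
    (hf₂ : ∀ z, f₂ z = p₂.eval z / q₂.eval z)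
    (a : ℂ) :
    ∃ C > (0 : ℝ), ∃ r > (0 : ℝ), ∀ z : ℂ,
      0 < ‖z - a‖ → ‖z - a‖ < r →
        ‖Jac f₁ f₂ z‖ ≤ C / ‖z - a‖ := by
  obtain rfl : f₁ = fun z ↦ p₁.eval z / q₁.eval z := funext hf₁
  obtain rfl : f₂ = fun z ↦ p₂.eval z / q₂.eval z := funext hf₂
  obtain ⟨g₁, hg₁, hlog₁⟩ :=
    (meromorphicAt_eval_div_eval p₁ q₁ a).exists_logDeriv_eventuallyEq_div_add
      (meromorphicOrderAt_eval_div_eval_ne_top hp₁ hq₁ a)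
  obtain ⟨g₂, hg₂, hlog₂⟩ :=
    (meromorphicAt_eval_div_eval p₂ q₂ a).exists_logDeriv_eventuallyEq_div_add
      (meromorphicOrderAt_eval_div_eval_ne_top hp₂ hq₂ a)
  obtain ⟨C, hC, hJ⟩ := (Jac_isBigO_inv_sub hg₁.continuousAt hg₂.continuousAt
    (by simpa only [← ofReal_intCast] using hlog₁)
    (by simpa only [← ofReal_intCast] using hlog₂)).exists_pos
  obtain ⟨r, hr, hball⟩ := Metric.eventually_nhds_iff.1 (eventually_nhdsWithin_iff.1 hJ.bound)
  refine ⟨C, hC, r, hr, fun z hz hzr ↦ ?_⟩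
  simpa [norm_inv, div_eq_mul_inv] using
    hball (by rwa [dist_eq_norm]) (show z ≠ a from sub_ne_zero.1 (norm_pos_iff.1 hz))

/-- the Jacobian determinant of `Log ∘ f` has only simple poles: near any
zero or pole `a` of `f₁·f₂`, `|J(z)| ≤ C/|z−a|`. -/
theorem stmt1 (p₁ q₁ p₂ q₂ : Polynomial ℂ)
    (hp₁ : p₁ ≠ 0) (hq₁ : q₁ ≠ 0) (hp₂ : p₂ ≠ 0) (hq₂ : q₂ ≠ 0)
    (f₁ f₂ : ℂ → ℂ)
    (hf₁ : ∀ z, f₁ z = p₁.eval z / q₁.eval z)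
    (hf₂ : ∀ z, f₂ z = p₂.eval z / q₂.eval z)
    (a : ℂ) (ha : (p₁ * p₂ * q₁ * q₂).IsRoot a) :
    ∃ C > (0 : ℝ), ∃ r > (0 : ℝ), ∀ z : ℂ,
      0 < ‖z - a‖ → ‖z - a‖ < r →
        ‖Jac f₁ f₂ z‖ ≤ C / ‖z - a‖ :=
  stmt1_general p₁ q₁ p₂ q₂ hp₁ hq₁ hp₂ hq₂ f₁ f₂ hf₁ hf₂ a
end

section
/- For nonzero rational functions f₁, f₂ on ℂ, the Jacobian determinant J(z) of Log∘(f₁,f₂) decays at infinity at least like |z|^{-3}: there exist C > 0 and R > 0 such that |J(z)| ≤ C·|z|^{-3} for all |z| > R. -/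
/-!
Over `ℂ` a polynomial splits, so `p'/p = ∑_{r ∈ roots p} 1/(z - r)`, and each term is
`1/z + O(z⁻²)`. Hence the logarithmic derivative of `f = p/q` is `d/z + O(z⁻²)` with
`d = deg p - deg q` an integer. Since `J = -Im(a b̄)/2` for the logarithmic derivatives `a, b`
of `f₁, f₂`, and the leading term `(d₁/z)·conj(d₂/z) = d₁d₂/|z|²` of `a b̄` is real, only the
cross terms of size `O(z⁻²)·O(z⁻¹)` survive in `J`.
-/

open Complex

open Filter Bornology Asymptotics Polynomial ComplexConjugate

theorem Asymptotics.IsBigO.multisetSum {α ι E F : Type*} [SeminormedAddCommGroup E] [Norm F]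
    {l : Filter α} {s : Multiset ι} {f : ι → α → E} {g : α → F}
    (h : ∀ i ∈ s, f i =O[l] g) : (fun x => (s.map fun i => f i x).sum) =O[l] g := by
  induction s using Multiset.induction_on with
  | empty => simpa using isBigO_zero g l
  | cons a s ih =>
    simp only [Multiset.map_cons, Multiset.sum_cons]
    exact (h a (Multiset.mem_cons_self a s)).add
      (ih fun i hi => h i (Multiset.mem_cons_of_mem hi))

theorem Asymptotics.IsBigO.conj {α F : Type*} [Norm F] {l : Filter α} {f : α → ℂ}
    {g : α → F} (h : f =O[l] g) : (fun x => conj (f x)) =O[l] g :=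
  .of_norm_left (by simpa only [Complex.norm_conj] using h.norm_left)

theorem Asymptotics.IsBigO.exists_pos_bound_of_norm_gt {V E F : Type*}
    [SeminormedAddCommGroup V] [Norm E] [SeminormedAddCommGroup F] {f : V → E} {g : V → F}
    (h : f =O[cobounded V] g) :
    ∃ C > (0 : ℝ), ∃ R > (0 : ℝ), ∀ z, R < ‖z‖ → ‖f z‖ ≤ C * ‖g z‖ := by
  obtain ⟨C, hC, hCf⟩ := h.exists_pos
  obtain ⟨R, -, hR⟩ :=
    (Metric.hasBasis_cobounded_compl_closedBall (0 : V)).eventually_iff.1 hCf.bound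
  refine ⟨C, hC, max R 1, by positivity, fun z hz => hR ?_⟩
  simpa using (le_max_left R 1).trans_lt hz

section NormedField

variable {𝕜 : Type*} [NontriviallyNormedField 𝕜]

theorem isBigO_one_div_sub_sub_one_div_cobounded (r : 𝕜) :
    (fun z : 𝕜 => 1 / (z - r) - 1 / z) =O[cobounded 𝕜] fun z => z⁻¹ ^ 2 := by
  have hinv : (fun z : 𝕜 => (z - r)⁻¹) =O[cobounded 𝕜] fun z => z⁻¹ :=
    (IsEquivalent.refl.sub_isLittleO (isLittleO_const_id_cobounded r)).inv.isBigO
  refine ((hinv.mul (isBigO_refl (fun z : 𝕜 => z⁻¹) _)).const_mul_left r).congr' ?_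
    (.of_forall fun z => (sq _).symm)
  filter_upwards [tendsto_norm_cobounded_atTop.eventually_gt_atTop ‖r‖] with z hz
  have hz0 : z ≠ 0 := by rintro rfl; simp at hz; linarith [norm_nonneg r]
  have hzr : z - r ≠ 0 := by rintro h; rw [sub_eq_zero.1 h] at hz; exact lt_irrefl _ hz
  field_simp
  ring

theorem Polynomial.eventually_eval_ne_zero_cobounded {p : 𝕜[X]} (hp : p ≠ 0) :
    ∀ᶠ z in cobounded 𝕜, p.eval z ≠ 0 :=
  isBounded_def.1 (p.finite_setOfPred_isRoot hp).isBounded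

theorem Polynomial.Splits.isBigO_logDeriv_eval_sub {p : 𝕜[X]} (hs : p.Splits) (hp : p ≠ 0) :
    (fun z => logDeriv (fun w => p.eval w) z - p.natDegree / z) =O[cobounded 𝕜]
      fun z => z⁻¹ ^ 2 := by
  refine (IsBigO.multisetSum (s := p.roots) fun r _ =>
    isBigO_one_div_sub_sub_one_div_cobounded r).congr' ?_ EventuallyEq.rfl
  filter_upwards [eventually_eval_ne_zero_cobounded hp] with z hz
  rw [Multiset.sum_map_sub, logDeriv_apply, Polynomial.deriv,
    hs.eval_derivative_div_eval_of_ne_zero hz, hs.natDegree_eq_card_roots, Multiset.map_const',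
    Multiset.sum_replicate, nsmul_eq_mul, mul_one_div]

theorem Polynomial.Splits.isBigO_logDeriv_eval_div_eval_sub {p q : 𝕜[X]} (hps : p.Splits)
    (hqs : q.Splits) (hp : p ≠ 0) (hq : q ≠ 0) :
    (fun z => logDeriv (fun w => p.eval w / q.eval w) z - ((p.natDegree : 𝕜) - q.natDegree) / z)
      =O[cobounded 𝕜] fun z => z⁻¹ ^ 2 := by
  refine ((hps.isBigO_logDeriv_eval_sub hp).sub (hqs.isBigO_logDeriv_eval_sub hq)).congr' ?_
    EventuallyEq.rfl
  filter_upwards [eventually_eval_ne_zero_cobounded hp, eventually_eval_ne_zero_cobounded hq]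
    with z hpz hqz
  rw [logDeriv_div z hpz hqz p.differentiableAt q.differentiableAt]
  ring

end NormedField

theorem isBigO_im_mul_conj_cobounded {a b : ℂ → ℂ} {c₁ c₂ : ℝ}
    (ha : (fun z => a z - c₁ / z) =O[cobounded ℂ] fun z => z⁻¹ ^ 2)
    (hb : (fun z => b z - c₂ / z) =O[cobounded ℂ] fun z => z⁻¹ ^ 2) :
    (fun z => (a z * conj (b z)).im) =O[cobounded ℂ] fun z => z⁻¹ ^ 3 := by
  have hinv (c : ℝ) : (fun z : ℂ => c / z) =O[cobounded ℂ] fun z => z⁻¹ := by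
    simpa only [div_eq_mul_inv] using isBigO_const_mul_self (c : ℂ) (fun z : ℂ => z⁻¹) _
  have hsq : (fun z : ℂ => z⁻¹ ^ 2) =O[cobounded ℂ] fun z => z⁻¹ := by
    simpa only [sq, mul_one] using
      (isBigO_refl (fun z : ℂ => z⁻¹) _).mul (tendsto_inv₀_cobounded.isBigO_one ℂ)
  have hb' : b =O[cobounded ℂ] fun z => z⁻¹ := by
    simpa using (hb.trans hsq).add (hinv c₂)
  have hsplit (z : ℂ) :
      (a z * conj (b z)).im = ((a z - c₁ / z) * conj (b z) + c₁ / z * conj (b z - c₂ / z)).im := by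
    have hreal : (c₁ / z * conj (c₂ / z)).im = 0 := by
      rw [map_div₀, Complex.conj_ofReal, div_mul_div_comm, Complex.mul_conj]
      norm_cast
    rw [show (a z - c₁ / z) * conj (b z) + c₁ / z * conj (b z - c₂ / z)
        = a z * conj (b z) - c₁ / z * conj (c₂ / z) by rw [map_sub]; ring,
      Complex.sub_im, hreal, sub_zero]
  have hsum := (ha.mul hb'.conj).add (((hinv c₁).mul hb.conj).congr_right fun z => by ring)
  refine (isBigO_of_le _ fun z => ?_).trans (hsum.congr_right fun z => by ring)
  rw [hsplit]
  exact (Real.norm_eq_abs _).trans_le (Complex.abs_im_le_norm _)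

theorem Jac_eq_neg_im_div_two (f₁ f₂ : ℂ → ℂ) (z : ℂ) :
    Jac f₁ f₂ z = -((logDeriv f₁ z * conj (logDeriv f₂ z)).im / 2 : ℝ) := by
  have hconj : conj (logDeriv f₁ z) * logDeriv f₂ z
      = conj (logDeriv f₁ z * conj (logDeriv f₂ z)) := by
    simp
  rw [Jac, ← logDeriv_apply, ← logDeriv_apply, hconj, Complex.sub_conj]
  push_cast
  ring_nf
  rw [I_sq]
  ring

theorem isBigO_Jac_cobounded {f₁ f₂ : ℂ → ℂ} {c₁ c₂ : ℝ}
    (h₁ : (fun z => logDeriv f₁ z - c₁ / z) =O[cobounded ℂ] fun z => z⁻¹ ^ 2)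
    (h₂ : (fun z => logDeriv f₂ z - c₂ / z) =O[cobounded ℂ] fun z => z⁻¹ ^ 2) :
    Jac f₁ f₂ =O[cobounded ℂ] fun z => z⁻¹ ^ 3 := by
  refine .trans (isBigO_of_le' (c := 1 / 2) _ fun z => ?_) (isBigO_im_mul_conj_cobounded h₁ h₂)
  rw [Jac_eq_neg_im_div_two, norm_neg, Complex.norm_real, norm_div, Real.norm_two]
  linarith

/-- the Jacobian determinant of `Log ∘ (f₁, f₂)` decays at infinity at
least like `|z|⁻³`. -/
theorem stmt2 (p₁ q₁ p₂ q₂ : Polynomial ℂ)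
    (hp₁ : p₁ ≠ 0) (hq₁ : q₁ ≠ 0) (hp₂ : p₂ ≠ 0) (hq₂ : q₂ ≠ 0)
    (f₁ f₂ : ℂ → ℂ)
    (hf₁ : ∀ z, f₁ z = p₁.eval z / q₁.eval z)
    (hf₂ : ∀ z, f₂ z = p₂.eval z / q₂.eval z) :
    ∃ C > (0 : ℝ), ∃ R > (0 : ℝ), ∀ z : ℂ, R < ‖z‖ →
      ‖Jac f₁ f₂ z‖ ≤ C * ‖z‖ ⁻¹ ^ 3 := by
  obtain rfl : f₁ = fun z => p₁.eval z / q₁.eval z := funext hf₁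
  obtain rfl : f₂ = fun z => p₂.eval z / q₂.eval z := funext hf₂
  have h₁ := (IsAlgClosed.splits p₁).isBigO_logDeriv_eval_div_eval_sub
    (IsAlgClosed.splits q₁) hp₁ hq₁
  have h₂ := (IsAlgClosed.splits p₂).isBigO_logDeriv_eval_div_eval_sub
    (IsAlgClosed.splits q₂) hp₂ hq₂
  have hJ := isBigO_Jac_cobounded (c₁ := p₁.natDegree - q₁.natDegree)
    (c₂ := p₂.natDegree - q₂.natDegree) (by exact_mod_cast h₁) (by exact_mod_cast h₂)
  simpa only [norm_pow, norm_inv] using hJ.exists_pos_bound_of_norm_gt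
end

section
/- The map Log f for f(z) = (z, z^m − 1) restricted to the open sector U₁ = {z ∈ ℂ* : 0 < arg z < π/|m|} is injective, for any nonzero integer m. -/
/-!
If `z` and `w` have the same image, then `|z| = |w|`, and `a = z^m`, `b = w^m` satisfy
`|a| = |b|` and `|a - 1| = |b - 1|`, so `b = a` or `b = conj a`. On the sector
`Im (z^m) = |z|^m sin (m arg z)` has the sign of `m`, which excludes `b = conj a ≠ a`.
Finally `z ↦ z^m` is injective on each circle within the sector: there `m arg z` ranges over
an interval of length `π < 2π`.
-/

open Complex

section

open Real

theorem Complex.zpow_eq_norm_zpow_mul_exp (z : ℂ) (m : ℤ) :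
    z ^ m = ↑(‖z‖ ^ m) * exp ((m * arg z : ℝ) * I) := by
  conv_lhs => rw [← norm_mul_exp_arg_mul_I z]
  rw [mul_zpow, ← exp_int_mul]
  push_cast
  ring_nf

theorem Complex.im_zpow (z : ℂ) (m : ℤ) : (z ^ m).im = ‖z‖ ^ m * Real.sin (m * arg z) := by
  rw [zpow_eq_norm_zpow_mul_exp, im_ofReal_mul, exp_ofReal_mul_I_im]

theorem Complex.eq_of_norm_eq_of_norm_sub_one_eq {a b : ℂ} (h₁ : ‖a‖ = ‖b‖)
    (h₂ : ‖a - 1‖ = ‖b - 1‖) (him : 0 < a.im * b.im) : a = b := by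
  rw [← sq_eq_sq₀ (norm_nonneg _) (norm_nonneg _), Complex.sq_norm, Complex.sq_norm,
    normSq_apply, normSq_apply] at h₁ h₂
  simp only [sub_re, one_re, sub_im, one_im, sub_zero] at h₂
  have hre : a.re = b.re := by linarith
  have hsq : a.im ^ 2 = b.im ^ 2 := by rw [hre] at h₁; linarith
  refine Complex.ext hre ((sq_eq_sq_iff_eq_or_eq_neg.1 hsq).resolve_right fun hneg => ?_)
  rw [hneg] at him
  nlinarith

theorem mul_sin_mul_pos {m : ℤ} {θ : ℝ} (h₀ : 0 < θ) (h₁ : θ < π / |(m : ℝ)|) :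
    0 < m * Real.sin (m * θ) := by
  have hm : 0 < |(m : ℝ)| := (div_pos_iff_of_pos_left pi_pos).1 (h₀.trans h₁)
  have h_even : m * Real.sin (m * θ) = |(m : ℝ)| * Real.sin (|(m : ℝ)| * θ) := by
    rcases abs_choice (m : ℝ) with h | h <;> rw [h]
    rw [neg_mul (m : ℝ) θ, Real.sin_neg, neg_mul_neg]
  rw [h_even]
  exact mul_pos hm (sin_pos_of_pos_of_lt_pi (by positivity) (by rwa [← lt_div_iff₀' hm]))

theorem abs_mul_sub_mul_lt_pi {m : ℤ} {θ₁ θ₂ : ℝ} (h₁ : θ₁ ∈ Set.Ioo 0 (π / |(m : ℝ)|))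
    (h₂ : θ₂ ∈ Set.Ioo 0 (π / |(m : ℝ)|)) : |m * θ₁ - m * θ₂| < π := by
  have hm : 0 < |(m : ℝ)| := (div_pos_iff_of_pos_left pi_pos).1 (h₁.1.trans h₁.2)
  rw [← mul_sub, abs_mul]
  calc |(m : ℝ)| * |θ₁ - θ₂| < |(m : ℝ)| * (π / |(m : ℝ)|) :=
        mul_lt_mul_of_pos_left
          (abs_sub_lt_iff.2 ⟨by linarith [h₁.2, h₂.1], by linarith [h₁.1, h₂.2]⟩) hm
    _ = π := mul_div_cancel₀ _ hm.ne'

variable {m : ℤ} {z w : ℂ}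

theorem Complex.mul_im_zpow_pos (h₀ : 0 < arg z) (h₁ : arg z < π / |(m : ℝ)|) :
    0 < m * (z ^ m).im := by
  have hz : z ≠ 0 := fun h => by simp [h] at h₀
  rw [im_zpow, mul_left_comm]
  exact mul_pos (zpow_pos (norm_pos_iff.2 hz) m) (mul_sin_mul_pos h₀ h₁)

theorem Complex.im_zpow_mul_im_zpow_pos (hz₀ : 0 < arg z) (hz₁ : arg z < π / |(m : ℝ)|)
    (hw₀ : 0 < arg w) (hw₁ : arg w < π / |(m : ℝ)|) : 0 < (z ^ m).im * (w ^ m).im := by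
  have h := mul_pos (mul_im_zpow_pos hz₀ hz₁) (mul_im_zpow_pos hw₀ hw₁)
  rw [mul_mul_mul_comm] at h
  exact pos_of_mul_pos_right h (mul_self_nonneg _)

theorem Complex.eq_of_zpow_eq_of_norm_eq (hz₀ : 0 < arg z) (hz₁ : arg z < π / |(m : ℝ)|)
    (hw₀ : 0 < arg w) (hw₁ : arg w < π / |(m : ℝ)|) (hn : ‖z‖ = ‖w‖) (h : z ^ m = w ^ m) :
    z = w := by
  have hz : z ≠ 0 := fun h => by simp [h] at hz₀
  have hm : (m : ℝ) ≠ 0 := abs_pos.1 ((div_pos_iff_of_pos_left pi_pos).1 (hz₀.trans hz₁))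
  refine ext_norm_arg hn (mul_left_cancel₀ hm (sub_eq_zero.1 ?_))
  have hexp : exp ((m * arg z : ℝ) * I) = exp ((m * arg w : ℝ) * I) := by
    rw [zpow_eq_norm_zpow_mul_exp, zpow_eq_norm_zpow_mul_exp, hn] at h
    exact mul_left_cancel₀ (ofReal_ne_zero.2 (zpow_ne_zero m (hn ▸ norm_ne_zero_iff.2 hz))) h
  rw [exp_eq_exp_iff_exp_sub_eq_one, ← sub_mul, ← ofReal_sub] at hexp
  have hcos := congrArg re hexp
  rw [exp_ofReal_mul_I_re, one_re] at hcos
  obtain ⟨hlt, hgt⟩ := abs_lt.1 (abs_mul_sub_mul_lt_pi ⟨hz₀, hz₁⟩ ⟨hw₀, hw₁⟩)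
  exact (cos_eq_one_iff_of_lt_of_lt (by linarith [pi_pos]) (by linarith [pi_pos])).1 hcos

end

theorem stmt7_general (m : ℤ) :
    Set.InjOn
      (fun z : ℂ => (Real.log ‖z‖, Real.log ‖z ^ m - 1‖))
      {z : ℂ | z ≠ 0 ∧ 0 < Complex.arg z ∧ Complex.arg z < Real.pi / (|m| : ℝ) ∧
        z ^ m ≠ 1} := by
  rintro z ⟨hz, hz₀, hz₁, hz₂⟩ w ⟨hw, hw₀, hw₁, hw₂⟩ h
  obtain ⟨h₁, h₂⟩ := Prod.mk.inj h
  have hn : ‖z‖ = ‖w‖ := Real.log_injOn_pos (norm_pos_iff.2 hz) (norm_pos_iff.2 hw) h₁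
  have hn₁ : ‖z ^ m - 1‖ = ‖w ^ m - 1‖ :=
    Real.log_injOn_pos (norm_pos_iff.2 (sub_ne_zero.2 hz₂)) (norm_pos_iff.2 (sub_ne_zero.2 hw₂)) h₂
  have hnm : ‖z ^ m‖ = ‖w ^ m‖ := by rw [norm_zpow, norm_zpow, hn]
  refine eq_of_zpow_eq_of_norm_eq hz₀ hz₁ hw₀ hw₁ hn ?_
  exact eq_of_norm_eq_of_norm_sub_one_eq hnm hn₁ (im_zpow_mul_im_zpow_pos hz₀ hz₁ hw₀ hw₁)

/-- the map `Log f` for `f(z) = (z, z^m − 1)` restricted to the open sector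
`U₁ = {z ∈ ℂ* : 0 < arg z < π/|m|}` (minus the m-th roots of unity) is injective. -/
theorem stmt7 (m : ℤ) (hm : m ≠ 0) :
    Set.InjOn
      (fun z : ℂ => (Real.log ‖z‖, Real.log ‖z ^ m - 1‖))
      {z : ℂ | z ≠ 0 ∧ 0 < Complex.arg z ∧ Complex.arg z < Real.pi / (|m| : ℝ) ∧
        z ^ m ≠ 1} :=
  stmt7_general m
end

section
/- For the map f(z) = (z, z^m − 1) with m a nonzero integer, the area of the amoeba A_f = {(log|z|, log|z^m−1|) : z ∈ ℂ*, z^m ≠ 1} equals π²/(2|m|). -/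
/-!
Write `z = e^(u + iθ)`. Then `‖z^m‖ = e^(mu)`, and as `θ` varies, `‖z^m - 1‖` sweeps out exactly
`[|e^(mu) - 1|, e^(mu) + 1]`, since the circle of radius `e^(mu)` is connected. So away from the
null line `u = 0` the amoeba is the region between the graphs of `log |e^(mu) - 1|` and
`log (e^(mu) + 1)`. Its vertical width is `log |coth (mu/2)|`. For `s > 0`, the expansion
`log coth (s/2) = ∑ 2 e^(-(2k+1)s) / (2k+1)` integrates termwise to `∑ 2/(2k+1)² = π²/4`. Evenness
and the substitution `s = mu` account for the remaining factor `2/|m|`.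
-/

open Complex MeasureTheory Set

lemma hasSum_one_div_odd_sq :
    HasSum (fun k : ℕ => 1 / (2 * (k : ℝ) + 1) ^ 2) (Real.pi ^ 2 / 8) := by
  have hodd : Summable (fun k : ℕ => 1 / ((2 * k + 1 : ℕ) : ℝ) ^ 2) :=
    hasSum_zeta_two.summable.comp_injective fun a b h => by omega
  have heven :
      HasSum (fun k : ℕ => 1 / ((2 * k : ℕ) : ℝ) ^ 2) (1 / 4 * (Real.pi ^ 2 / 6)) := by
    have hfun : (fun k : ℕ => 1 / ((2 * k : ℕ) : ℝ) ^ 2)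
        = fun k : ℕ => 1 / 4 * (1 / (k : ℝ) ^ 2) := by
      ext k; push_cast; ring
    exact hfun ▸ hasSum_zeta_two.mul_left _
  have htotal := (HasSum.even_add_odd (f := fun n : ℕ => 1 / (n : ℝ) ^ 2) heven
    hodd.hasSum).unique hasSum_zeta_two
  have hfun : (fun k : ℕ => 1 / ((2 * k + 1 : ℕ) : ℝ) ^ 2)
      = fun k : ℕ => 1 / (2 * (k : ℝ) + 1) ^ 2 := by
    ext k; push_cast; rfl
  rw [← hfun, show Real.pi ^ 2 / 8 = ∑' k : ℕ, 1 / ((2 * k + 1 : ℕ) : ℝ) ^ 2 by linarith]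
  exact hodd.hasSum

/-- `log |coth (s/2)|`, written as the length of `[log |e^s - 1|, log (e^s + 1)]`. -/
noncomputable def logCothHalf (s : ℝ) : ℝ :=
  Real.log (Real.exp s + 1) - Real.log |Real.exp s - 1|

lemma measurable_logCothHalf : Measurable logCothHalf := by
  unfold logCothHalf; fun_prop

lemma logCothHalf_neg (s : ℝ) : logCothHalf (-s) = logCothHalf s := by
  rcases eq_or_ne s 0 with rfl | hs
  · rw [neg_zero]
  have hexp : Real.exp s - 1 ≠ 0 := sub_ne_zero.mpr (by simpa using hs)
  have hplus : Real.exp (-s) + 1 = Real.exp (-s) * (Real.exp s + 1) := by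
    rw [mul_add, ← Real.exp_add]; simp [add_comm]
  have hminus : |Real.exp (-s) - 1| = Real.exp (-s) * |Real.exp s - 1| := by
    rw [← abs_of_pos (Real.exp_pos (-s)), ← abs_mul, mul_sub, ← Real.exp_add, abs_sub_comm]
    simp
  unfold logCothHalf
  rw [hplus, hminus, Real.log_mul (by positivity) (by positivity),
    Real.log_mul (by positivity) (abs_ne_zero.mpr hexp)]
  ring

lemma hasSum_logCothHalf {s : ℝ} (hs : 0 < s) :
    HasSum (fun k : ℕ => 2 / (2 * k + 1) * Real.exp (-(2 * k + 1) * s)) (logCothHalf s) := by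
  set x := Real.exp (-s)
  have hx : |x| < 1 := by
    rw [abs_of_pos (Real.exp_pos _)]; exact Real.exp_lt_one_iff.mpr (neg_lt_zero.mpr hs)
  have hlog : Real.log (1 + x) - Real.log (1 - x) = logCothHalf s := by
    have hplus : Real.exp s + 1 = Real.exp s * (1 + x) := by
      rw [mul_add, ← Real.exp_add]; simp
    have hminus : Real.exp s - 1 = Real.exp s * (1 - x) := by
      rw [mul_sub, ← Real.exp_add]; simp
    have hx1 : 0 < 1 - x := by linarith [le_abs_self x]
    unfold logCothHalf
    rw [hplus, hminus, abs_of_pos (by positivity), Real.log_mul (by positivity) (by positivity),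
      Real.log_mul (by positivity) hx1.ne']
    ring
  rw [← hlog]
  convert Real.hasSum_log_sub_log_of_abs_lt_one hx using 2 with k
  rw [← Real.exp_nat_mul]
  push_cast
  ring_nf

lemma setLIntegral_ofReal_exp_mul_Ioi {a : ℝ} (ha : a < 0) :
    ∫⁻ x in Ioi 0, ENNReal.ofReal (Real.exp (a * x)) = ENNReal.ofReal (-a⁻¹) := by
  rw [← ofReal_integral_eq_lintegral_ofReal (integrableOn_exp_mul_Ioi ha 0)
    (ae_of_all _ fun x => (Real.exp_pos _).le), integral_exp_mul_Ioi ha 0]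
  simp [neg_div]

lemma setLIntegral_logCothHalf_Ioi :
    ∫⁻ s in Ioi 0, ENNReal.ofReal (logCothHalf s) = ENNReal.ofReal (Real.pi ^ 2 / 4) := by
  have hterm (k : ℕ) : ∫⁻ s in Ioi 0,
      ENNReal.ofReal (2 / (2 * k + 1) * Real.exp (-(2 * k + 1) * s))
        = ENNReal.ofReal (2 * (1 / (2 * (k : ℝ) + 1) ^ 2)) := by
    simp_rw [ENNReal.ofReal_mul (by positivity : (0 : ℝ) ≤ 2 / (2 * k + 1))]
    rw [lintegral_const_mul _ (by fun_prop), setLIntegral_ofReal_exp_mul_Ioi (by linarith),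
      ← ENNReal.ofReal_mul (by positivity)]
    congr 1
    field_simp
  calc ∫⁻ s in Ioi 0, ENNReal.ofReal (logCothHalf s)
      = ∫⁻ s in Ioi 0, ∑' k : ℕ,
          ENNReal.ofReal (2 / (2 * k + 1) * Real.exp (-(2 * k + 1) * s)) := by
        refine setLIntegral_congr_fun measurableSet_Ioi fun s hs => ?_
        have hsum := hasSum_logCothHalf hs
        rw [← hsum.tsum_eq, ENNReal.ofReal_tsum_of_nonneg (fun k => by positivity) hsum.summable]
    _ = ∑' k : ℕ, ENNReal.ofReal (2 * (1 / (2 * (k : ℝ) + 1) ^ 2)) := by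
        rw [lintegral_tsum fun k => by fun_prop]
        simp_rw [hterm]
    _ = ENNReal.ofReal (Real.pi ^ 2 / 4) := by
        have hsum := hasSum_one_div_odd_sq.mul_left 2
        rw [← ENNReal.ofReal_tsum_of_nonneg (fun k => by positivity) hsum.summable, hsum.tsum_eq]
        ring_nf

lemma lintegral_eq_two_mul_setLIntegral_Ioi_of_even {f : ℝ → ENNReal}
    (hf : ∀ x, f (-x) = f x) : ∫⁻ x, f x = 2 * ∫⁻ x in Ioi 0, f x := by
  have hIio : ∫⁻ x in Iio 0, f x = ∫⁻ x in Ioi 0, f x := by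
    conv_lhs => rw [← Measure.map_neg_eq_self (volume : Measure ℝ),
      measurableEmbedding_neg.restrict_map, measurableEmbedding_neg.lintegral_map]
    simp [hf]
  rw [← lintegral_add_compl f measurableSet_Ioi, compl_Ioi,
    Measure.restrict_congr_set Iio_ae_eq_Iic.symm, hIio, two_mul, add_comm]

lemma lintegral_logCothHalf :
    ∫⁻ s, ENNReal.ofReal (logCothHalf s) = ENNReal.ofReal (Real.pi ^ 2 / 2) := by
  rw [lintegral_eq_two_mul_setLIntegral_Ioi_of_even fun s => by rw [logCothHalf_neg],
    setLIntegral_logCothHalf_Ioi, ← ENNReal.ofReal_ofNat 2, ← ENNReal.ofReal_mul zero_le_two]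
  ring_nf

lemma lintegral_logCothHalf_mul {c : ℝ} (hc : c ≠ 0) :
    ∫⁻ u, ENNReal.ofReal (logCothHalf (c * u)) = ENNReal.ofReal (Real.pi ^ 2 / (2 * |c|)) := by
  rw [← lintegral_map (measurable_logCothHalf.ennreal_ofReal) (measurable_const_mul c),
    Real.map_volume_mul_left hc, lintegral_smul_measure, lintegral_logCothHalf, smul_eq_mul,
    ← ENNReal.ofReal_mul (abs_nonneg _), abs_inv]
  congr 1
  field_simp

def amoeba (m : ℤ) : Set (ℝ × ℝ) :=
  {p | ∃ z : ℂ, z ≠ 0 ∧ z ^ m ≠ 1 ∧ p = (Real.log ‖z‖, Real.log ‖z ^ m - 1‖)}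

lemma exists_norm_eq_and_norm_sub_one_eq {ρ t : ℝ} (hρ : 0 ≤ ρ)
    (ht : t ∈ Icc |ρ - 1| (ρ + 1)) :
    ∃ w : ℂ, ‖w‖ = ρ ∧ ‖w - 1‖ = t := by
  have hsphere : IsPreconnected (Metric.sphere (0 : ℂ) ρ) :=
    (isConnected_sphere (by simp [Complex.rank_real_complex]) 0 hρ).isPreconnected
  have hρ_mem : (ρ : ℂ) ∈ Metric.sphere (0 : ℂ) ρ := by simp [abs_of_nonneg hρ]
  have hnegρ_mem : (-ρ : ℂ) ∈ Metric.sphere (0 : ℂ) ρ := by simp [abs_of_nonneg hρ]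
  have hleft : ‖(ρ : ℂ) - 1‖ = |ρ - 1| := by norm_cast
  have hright : ‖-(ρ : ℂ) - 1‖ = ρ + 1 := by
    rw [show -(ρ : ℂ) - 1 = -((ρ + 1 : ℝ) : ℂ) by push_cast; ring, norm_neg, norm_real,
      Real.norm_of_nonneg (by linarith)]
  have himage := (hsphere.image (fun w : ℂ => ‖w - 1‖) (by fun_prop)).Icc_subset
    (mem_image_of_mem _ hρ_mem) (mem_image_of_mem _ hnegρ_mem)
  rw [hleft, hright] at himage
  obtain ⟨w, hw, hwt⟩ := himage ht
  exact ⟨w, by simpa using hw, hwt⟩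

lemma exists_zpow_eq_of_norm_eq_exp {m : ℤ} (hm : m ≠ 0) {u : ℝ} {w : ℂ}
    (hw : ‖w‖ = Real.exp (m * u)) : ∃ z : ℂ, ‖z‖ = Real.exp u ∧ z ^ m = w := by
  have hw0 : w ≠ 0 := norm_pos_iff.mp (hw ▸ Real.exp_pos _)
  refine ⟨exp (log w / m), ?_, ?_⟩
  · rw [norm_exp, div_intCast_re, log_re, hw, Real.log_exp]
    field_simp
  · rw [← exp_int_mul, mul_div_cancel₀ _ (Int.cast_ne_zero.mpr hm), exp_log hw0]

lemma mem_amoeba_iff {m : ℤ} (hm : m ≠ 0) {u v : ℝ} (hu : u ≠ 0) :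
    (u, v) ∈ amoeba m ↔
      v ∈ Icc (Real.log |Real.exp (m * u) - 1|) (Real.log (Real.exp (m * u) + 1)) := by
  have hρ : Real.exp (m * u) ≠ 1 := by
    simpa using mul_ne_zero (Int.cast_ne_zero.mpr hm) hu
  have hρ_sub : 0 < |Real.exp (m * u) - 1| := abs_pos.mpr (sub_ne_zero.mpr hρ)
  constructor
  · rintro ⟨z, hz, hzm, hp⟩
    obtain ⟨rfl, rfl⟩ := Prod.ext_iff.mp hp
    have hnorm : ‖z ^ m‖ = Real.exp (m * Real.log ‖z‖) := by
      rw [norm_zpow, ← Real.rpow_intCast, Real.rpow_def_of_pos (norm_pos_iff.mpr hz), mul_comm]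
    rw [← hnorm] at hρ_sub ⊢
    refine ⟨Real.log_le_log hρ_sub ?_,
      Real.log_le_log (norm_pos_iff.mpr (sub_ne_zero.mpr hzm)) ?_⟩
    · simpa using abs_norm_sub_norm_le (z ^ m) 1
    · simpa using norm_sub_le (z ^ m) 1
  · rintro ⟨hlo, hhi⟩
    rw [Real.log_le_iff_le_exp hρ_sub] at hlo
    rw [Real.le_log_iff_exp_le (by positivity)] at hhi
    obtain ⟨w, hw, hwv⟩ := exists_norm_eq_and_norm_sub_one_eq (Real.exp_pos _).le ⟨hlo, hhi⟩
    obtain ⟨z, hz, rfl⟩ := exists_zpow_eq_of_norm_eq_exp hm hw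
    refine ⟨z, norm_pos_iff.mp (hz ▸ Real.exp_pos u), ?_, ?_⟩
    · intro h
      simp [h, (Real.exp_pos v).ne] at hwv
    · rw [hz, hwv, Real.log_exp, Real.log_exp]

lemma amoeba_ae_eq {m : ℤ} (hm : m ≠ 0) :
    amoeba m =ᵐ[volume] {p : ℝ × ℝ |
      p.2 ∈ Icc (Real.log |Real.exp (m * p.1) - 1|) (Real.log (Real.exp (m * p.1) + 1))} := by
  rw [Measure.volume_eq_prod]
  filter_upwards [Measure.quasiMeasurePreserving_fst.ae (volume.ae_ne 0)] with p hp
  exact propext (mem_amoeba_iff hm hp)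

lemma prod_volume_setOf_mem_Icc {α : Type*} [MeasurableSpace α] {μ : Measure α} [SFinite μ]
    {f g : α → ℝ} (hf : Measurable f) (hg : Measurable g) :
    μ.prod volume {p : α × ℝ | p.2 ∈ Icc (f p.1) (g p.1)}
      = ∫⁻ x, ENNReal.ofReal (g x - f x) ∂μ := by
  rw [Measure.prod_apply]
  · simp only [preimage_ofPred_eq, ofPred_mem_eq, Real.volume_Icc]
  · simpa using measurableSet_region_between_cc hf hg MeasurableSet.univ

/-- the area of the amoeba of `z ↦ (z, z^m − 1)` equals `π²/(2|m|)`. -/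
theorem stmt14 (m : ℤ) (hm : m ≠ 0) :
    volume {p : ℝ × ℝ | ∃ z : ℂ, z ≠ 0 ∧ z ^ m ≠ 1 ∧
        p = (Real.log ‖z‖, Real.log ‖z ^ m - 1‖)}
      = ENNReal.ofReal (Real.pi ^ 2 / (2 * (|m| : ℝ))) := by
  change volume (amoeba m) = _
  have hlo : Measurable fun u : ℝ => Real.log |Real.exp (m * u) - 1| := by fun_prop
  have hhi : Measurable fun u : ℝ => Real.log (Real.exp (m * u) + 1) := by fun_prop
  rw [measure_congr (amoeba_ae_eq hm), Measure.volume_eq_prod, prod_volume_setOf_mem_Icc hlo hhi]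
  exact_mod_cast lintegral_logCothHalf_mul (Int.cast_ne_zero.mpr hm)
end
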